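/- Let a, b ∈ ℂ with |a| = |b| = 1, Im(a) > 0, Im(b) > 0 and a ≠ b. Then u = (1 + a·b)/(a + b) is a real number with −1 < u < 1, and u (regarded as a point of ℂ) is collinear with the pair of points a and conj(b), and also collinear with the pair of points b and conj(a). -/

import Mathlib

/-!
Since `conj a = a⁻¹` and `conj b = b⁻¹`, conjugating `u` multiplies numerator and denominator by
`(a b)⁻¹`, so `u` is real. The identity `|a + b|² - |1 + a b|² = 4 Im a Im b` on the unit circle
gives `|u| < 1`. Finally `u (a + b) = 1 + a b` rearranges to `(a - u)(b - u) = u² - 1`, a real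
number; as `b - u = conj (conj b - u)`, this says `a - u` and `conj b - u` are real multiples of
each other, i.e. `u`, `a`, `conj b` are collinear, and symmetrically for `u`, `b`, `conj a`.
-/

open Complex ComplexConjugate

namespace Complex

theorem collinear_of_im_mul_conj_eq_zero {p q r : ℂ} (h : ((q - p) * conj (r - p)).im = 0) :
    Collinear ℝ ({p, q, r} : Set ℂ) := by
  rcases eq_or_ne r p with rfl | hrp
  · simpa [Set.pair_comm] using collinear_pair ℝ r q
  have hw : (q - p) * conj (r - p) = (((q - p) * conj (r - p)).re : ℂ) :=
    ext (by simp) (by rw [ofReal_im]; exact h)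
  have hrp' : r - p ≠ 0 := sub_ne_zero.2 hrp
  rw [collinear_iff_of_mem (p₀ := p) (by simp)]
  refine ⟨r - p, ?_⟩
  simp only [Set.mem_insert_iff, Set.mem_singleton_iff, forall_eq_or_imp, forall_eq]
  refine ⟨⟨0, by simp⟩, ⟨((q - p) * conj (r - p)).re / normSq (r - p), ?_⟩, ⟨1, by simp⟩⟩
  rw [real_smul, vadd_eq_add, ofReal_div, ← hw, ← mul_conj,
    mul_div_mul_right _ _ ((map_ne_zero _).2 hrp'), div_mul_cancel₀ _ hrp', sub_add_cancel]

theorem conj_one_add_mul_div_add {a b : ℂ} (ha : ‖a‖ = 1) (hb : ‖b‖ = 1) :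
    conj ((1 + a * b) / (a + b)) = (1 + a * b) / (a + b) := by
  have ha₀ : a ≠ 0 := norm_ne_zero_iff.1 (by simp [ha])
  have hb₀ : b ≠ 0 := norm_ne_zero_iff.1 (by simp [hb])
  rw [map_div₀, map_add, map_add, map_one, map_mul, ← inv_eq_conj ha, ← inv_eq_conj hb,
    show 1 + a⁻¹ * b⁻¹ = (1 + a * b) * (a * b)⁻¹ by field_simp; ring,
    show a⁻¹ + b⁻¹ = (a + b) * (a * b)⁻¹ by field_simp; ring,
    mul_div_mul_right _ _ (inv_ne_zero (mul_ne_zero ha₀ hb₀))]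

theorem normSq_add_sub_normSq_one_add_mul (a b : ℂ) :
    normSq (a + b) - normSq (1 + a * b) = 4 * a.im * b.im - (1 - normSq a) * (1 - normSq b) := by
  simp only [normSq_apply, add_re, add_im, mul_re, mul_im, one_re, one_im]
  ring

theorem normSq_one_add_mul_lt_normSq_add {a b : ℂ} (ha : ‖a‖ = 1) (hb : ‖b‖ = 1)
    (hia : 0 < a.im) (hib : 0 < b.im) : normSq (1 + a * b) < normSq (a + b) := by
  have := normSq_add_sub_normSq_one_add_mul a b
  rw [normSq_eq_norm_sq a, normSq_eq_norm_sq b, ha, hb] at this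
  nlinarith [mul_pos hia hib]

end Complex

theorem u_real_and_collinear (a b : ℂ)
    (ha : ‖a‖ = 1) (hb : ‖b‖ = 1)
    (hia : 0 < a.im) (hib : 0 < b.im)
    (u : ℂ) (hu : u = (1 + a * b) / (a + b)) :
    u.im = 0 ∧ -1 < u.re ∧ u.re < 1 ∧
    Collinear ℝ ({u, a, conj b} : Set ℂ) ∧
    Collinear ℝ ({u, b, conj a} : Set ℂ) := by
  have hab : a + b ≠ 0 := fun h => (add_pos hia hib).ne' (by simpa using congrArg im h)
  have hu_conj : conj u = u := hu ▸ conj_one_add_mul_div_add ha hb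
  have hu_im : u.im = 0 := conj_eq_iff_im.1 hu_conj
  have hu_sq : u.re ^ 2 < 1 := by
    have : normSq u < 1 := by
      rw [hu, normSq_div, div_lt_one (normSq_pos.2 hab)]
      exact normSq_one_add_mul_lt_normSq_add ha hb hia hib
    simpa [normSq_apply, hu_im, sq] using this
  have hprod : (a - u) * (b - u) = u ^ 2 - 1 := by
    rw [hu]; field_simp; ring
  have hprod_im : ((a - u) * (b - u)).im = 0 := by simp [hprod, sq, hu_im]
  obtain ⟨hlo, hhi⟩ := abs_lt.1 ((sq_lt_one_iff_abs_lt_one _).1 hu_sq)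
  refine ⟨hu_im, hlo, hhi, collinear_of_im_mul_conj_eq_zero ?_, collinear_of_im_mul_conj_eq_zero ?_⟩
  · simpa [hu_conj] using hprod_im
  · simpa [hu_conj, mul_comm] using hprod_im
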